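/- Let {a_1 (mod d_1), …, a_n (mod d_n)} be a covering system with distinct moduli in which 2, 3, and 6 do not all simultaneously occur among the moduli. Then there exist pairwise distinct primes p_1, …, p_n with p_i dividing 2^{d_i} − 1 for each i. -/

import Mathlib

/-!
Call a prime `q` primitive for `d` if `orderOf (2 : ZMod q) = d`; primitive primes for distinct
moduli are distinct and `q ∣ 2 ^ d - 1`. By Bang's theorem every `d > 1` other than `6` has one, and
a modulus `6` can take over the primitive prime `3` of `2` or `7` of `3`, whichever modulus is
absent, since both divide `2 ^ 6 - 1`.

For Bang's theorem, a prime `q ∣ Φ_n(2)` has order `ordCompl[q] n` modulo `q`, so it is primitive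
as soon as `q ∤ n`. If every prime factor of `Φ_n(2)` divides `n`, two distinct ones would satisfy
`q ∣ ordCompl[p] n ∣ p - 1` and vice versa, so there is only one, an odd prime `p`, and lifting the
exponent gives `p² ∤ Φ_n(2)`, so `Φ_n(2) = p`. Writing `n = p ^ (k + 1) * m` with `p ∤ m` and
`a = 2 ^ p ^ k`, `Φ_n(2) = Φ_{pm}(a)` and `Φ_{pm}(a) Φ_m(a) = Φ_m(a ^ p)`; the bounds
`(x - 1) ^ φ m < Φ_m(x) ≤ (x + 1) ^ φ m` then force `Φ_n(2) > p` except when `n = 6`.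
-/

open Polynomial Finset

theorem natCast_dvd_pow_sub_one_of_orderOf_dvd {p t : ℕ} {b : ℤ}
    (h : orderOf (b : ZMod p) ∣ t) : (p : ℤ) ∣ b ^ t - 1 := by
  rw [← ZMod.intCast_zmod_eq_zero_iff_dvd, Int.cast_sub, Int.cast_pow,
    orderOf_dvd_iff_pow_eq_one.mp h, Int.cast_one, sub_self]

theorem ordCompl_dvd_div_of_dvd {p n : ℕ} (hp : p.Prime) (hn : n ≠ 0) (hpn : p ∣ n) :
    ordCompl[p] n ∣ n / p := by
  refine Nat.dvd_div_of_mul_dvd ?_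
  conv_rhs => rw [← Nat.ordProj_mul_ordCompl_eq_self n p]
  exact mul_dvd_mul_right (dvd_pow_self p (hp.factorization_pos_of_dvd hn hpn).ne') _

theorem isPrimitiveRoot_ordCompl_of_dvd_cyclotomic_eval {p n : ℕ} {b : ℤ} (hp : p.Prime)
    (hn : n ≠ 0) (h : (p : ℤ) ∣ (cyclotomic n ℤ).eval b) :
    IsPrimitiveRoot (b : ZMod p) (ordCompl[p] n) := by
  have : Fact p.Prime := ⟨hp⟩
  have : NeZero ((ordCompl[p] n : ℕ) : ZMod p) :=
    ⟨by rw [Ne, ZMod.natCast_eq_zero_iff]; exact Nat.not_dvd_ordCompl hp hn⟩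
  rw [← isRoot_cyclotomic_prime_pow_mul_iff_of_charP (k := n.factorization p),
    Nat.ordProj_mul_ordCompl_eq_self, IsRoot.def, ← map_cyclotomic_int, eval_intCast_map,
    eq_intCast, ZMod.intCast_zmod_eq_zero_iff_dvd]
  exact h

theorem ordCompl_dvd_sub_one_of_dvd_cyclotomic_eval {p n : ℕ} {b : ℤ} (hp : p.Prime)
    (hn : n ≠ 0) (h : (p : ℤ) ∣ (cyclotomic n ℤ).eval b) : ordCompl[p] n ∣ p - 1 := by
  have : Fact p.Prime := ⟨hp⟩
  have hroot := isPrimitiveRoot_ordCompl_of_dvd_cyclotomic_eval hp hn h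
  rw [hroot.eq_orderOf]
  exact ZMod.orderOf_dvd_card_sub_one (hroot.ne_zero (Nat.ordCompl_pos p hn).ne')

theorem two_le_ordCompl_of_dvd_cyclotomic_eval_two {p n : ℕ} (hp : p.Prime) (hn : n ≠ 0)
    (h : (p : ℤ) ∣ (cyclotomic n ℤ).eval 2) : 2 ≤ ordCompl[p] n := by
  have : Fact p.Prime := ⟨hp⟩
  have hroot := isPrimitiveRoot_ordCompl_of_dvd_cyclotomic_eval hp hn h
  have := Nat.ordCompl_pos p hn
  by_contra! hm
  rw [show ordCompl[p] n = 1 by omega, IsPrimitiveRoot.one_right_iff, Int.cast_ofNat] at hroot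
  exact one_ne_zero (α := ZMod p) (by linear_combination hroot)

theorem eq_of_prime_dvd_cyclotomic_eval_of_dvd {p q n : ℕ} {b : ℤ} (hp : p.Prime) (hq : q.Prime)
    (hn : n ≠ 0) (hpn : p ∣ n) (hqn : q ∣ n) (hpb : (p : ℤ) ∣ (cyclotomic n ℤ).eval b)
    (hqb : (q : ℤ) ∣ (cyclotomic n ℤ).eval b) : p = q := by
  by_contra hne
  have hqp : q ∣ p - 1 := (Nat.dvd_ordCompl_of_dvd_not_dvd hqn fun h => hne
    ((Nat.prime_dvd_prime_iff_eq hp hq).mp h)).trans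
    (ordCompl_dvd_sub_one_of_dvd_cyclotomic_eval hp hn hpb)
  have hpq : p ∣ q - 1 := (Nat.dvd_ordCompl_of_dvd_not_dvd hpn fun h => hne
    ((Nat.prime_dvd_prime_iff_eq hq hp).mp h).symm).trans
    (ordCompl_dvd_sub_one_of_dvd_cyclotomic_eval hq hn hqb)
  have := Nat.le_of_dvd (by have := hp.two_le; omega) hqp
  have := Nat.le_of_dvd (by have := hq.two_le; omega) hpq
  omega

theorem not_sq_dvd_cyclotomic_eval {p n : ℕ} {b : ℤ} (hp : p.Prime) (hp_odd : Odd p)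
    (hpn : p ∣ n) (hb : b ^ (n / p) ≠ 1) (hpb : (p : ℤ) ∣ b ^ (n / p) - 1) :
    ¬ (p : ℤ) ^ 2 ∣ (cyclotomic n ℤ).eval b := by
  set x := b ^ (n / p)
  have hn : n ≠ 0 := by rintro rfl; simp [x] at hb
  have hx : x - 1 ≠ 0 := sub_ne_zero.mpr hb
  have hdiv : (x - 1) * (cyclotomic n ℤ).eval b ∣
      (x - 1) * ∑ i ∈ range p, x ^ i * 1 ^ (p - 1 - i) := by
    have hmem : n / p ∈ n.properDivisors := Nat.mem_properDivisors.mpr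
      ⟨Nat.div_dvd_of_dvd hpn, Nat.div_lt_self (Nat.pos_of_ne_zero hn) hp.one_lt⟩
    have := eval_dvd (x := b) (X_pow_sub_one_mul_cyclotomic_dvd_X_pow_sub_one_of_dvd ℤ hmem)
    rw [mul_comm (x - 1) (∑ i ∈ range p, _), geom_sum₂_mul, one_pow, ← pow_mul,
      Nat.div_mul_cancel hpn]
    simpa only [eval_mul, eval_sub, eval_pow, eval_X, eval_one] using this
  have hpx : ¬ (p : ℤ) ∣ x := fun h => hp.one_lt.ne'
    (by exact_mod_cast Int.eq_one_of_dvd_one (by positivity) ((dvd_sub_right h).mp hpb))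
  have hone := emultiplicity_geom_sum₂_eq_one (Nat.prime_iff_prime_int.mp hp) hp_odd hpb hpx
  intro hsq
  have := pow_dvd_iff_le_emultiplicity.mp (hsq.trans ((mul_dvd_mul_iff_left hx).mp hdiv))
  rw [hone] at this
  norm_num at this

theorem eval_cyclotomic_eq_prime {n p : ℕ} {b : ℤ} (hb : 1 < b) (hn : n ≠ 0) (hp : p.Prime)
    (hp_odd : Odd p) (hpb : (p : ℤ) ∣ (cyclotomic n ℤ).eval b)
    (hall : ∀ q : ℕ, q.Prime → (q : ℤ) ∣ (cyclotomic n ℤ).eval b → q ∣ n) :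
    (cyclotomic n ℤ).eval b = p := by
  have hpn := hall p hp hpb
  have hsq : ¬ (p : ℤ) ^ 2 ∣ (cyclotomic n ℤ).eval b := by
    refine not_sq_dvd_cyclotomic_eval hp hp_odd hpn
      (one_lt_pow₀ hb (Nat.div_pos (Nat.le_of_dvd (Nat.pos_of_ne_zero hn) hpn) hp.pos).ne').ne'
      (natCast_dvd_pow_sub_one_of_orderOf_dvd ?_)
    rw [← (isPrimitiveRoot_ordCompl_of_dvd_cyclotomic_eval hp hn hpb).eq_orderOf]
    exact ordCompl_dvd_div_of_dvd hp hn hpn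
  have huniq : ∀ {q : ℕ}, q.Prime → (q : ℤ) ∣ (cyclotomic n ℤ).eval b → q = p := fun hq hqb =>
    eq_of_prime_dvd_cyclotomic_eval_of_dvd hq hp hn (hall _ hq hqb) hpn hqb hpb
  obtain ⟨N, hN⟩ := Int.eq_ofNat_of_zero_le (cyclotomic_pos' n hb).le
  have hN0 : N ≠ 0 := by have := cyclotomic_pos' n hb; omega
  rw [hN] at hpb hsq huniq ⊢
  norm_cast at hpb hsq huniq ⊢
  obtain ⟨e, rfl⟩ : ∃ e, N = p ^ e := ⟨_, Nat.eq_prime_pow_of_unique_prime_dvd hN0 huniq⟩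
  have : e ≠ 0 := by rintro rfl; exact hp.one_lt.ne' (Nat.dvd_one.mp hpb)
  have : e < 2 := by
    by_contra! h
    exact hsq (pow_dvd_pow p h)
  obtain rfl : e = 1 := by omega
  exact pow_one p

theorem eval_cyclotomic_prime_pow_succ_mul {R : Type*} [CommRing R] {p : ℕ} (k m : ℕ)
    (hp : p.Prime) (x : R) :
    (cyclotomic (p ^ (k + 1) * m) R).eval x = (cyclotomic (p * m) R).eval (x ^ p ^ k) := by
  induction k generalizing x with
  | zero => simp
  | succ k ih =>
    have hdvd : p ∣ p ^ (k + 1) * m := (dvd_pow_self p k.succ_ne_zero).mul_right m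
    rw [pow_succ p (k + 1), mul_right_comm, ← cyclotomic_expand_eq_cyclotomic hp hdvd, expand_eval,
      ih, ← pow_mul, ← pow_succ']

theorem eval_cyclotomic_mul_prime_mul_eval_cyclotomic {R : Type*} [CommRing R] {p m : ℕ}
    (hp : p.Prime) (hpm : ¬ p ∣ m) (x : R) :
    (cyclotomic (p * m) R).eval x * (cyclotomic m R).eval x = (cyclotomic m R).eval (x ^ p) := by
  rw [← expand_eval, cyclotomic_expand_eq_cyclotomic_mul hp hpm, eval_mul, mul_comm m]

theorem mul_add_one_lt_pow {a p : ℕ} (ha : 2 ≤ a) (hp : 2 ≤ p) (h : 2 < a ∨ 3 < p) :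
    p * (a + 1) < a ^ p := by
  obtain rfl | rfl | hp4 : p = 2 ∨ p = 3 ∨ 4 ≤ p := by omega
  · have : 3 ≤ a := by omega
    nlinarith
  · have h3 : 3 ≤ a := by omega
    have : 3 * 3 ≤ a * a := Nat.mul_le_mul h3 h3
    rw [pow_succ, pow_two]
    nlinarith
  clear h hp
  induction p, hp4 using Nat.le_induction with
  | base => nlinarith [pow_le_pow_left₀ (Nat.zero_le 2) ha 3, pow_succ a 3]
  | succ p hp ih =>
    have : a + 1 ≤ a ^ p := (Nat.le_mul_of_pos_left _ (by omega)).trans ih.le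
    rw [pow_succ]
    nlinarith

theorem prime_lt_eval_cyclotomic_two {p k m : ℕ} (hp : p.Prime) (hpm : ¬ p ∣ m) (hm : 2 ≤ m)
    (hpk : 0 < k ∨ 3 < p) : (p : ℝ) < (cyclotomic (p ^ (k + 1) * m) ℝ).eval 2 := by
  set a : ℕ := 2 ^ p ^ k
  have ha : 2 ≤ a := Nat.le_self_pow (pow_ne_zero k hp.ne_zero) 2
  have ha' : 2 < a ∨ 3 < p := hpk.imp_left fun hk =>
    (Nat.pow_lt_pow_right (by norm_num) (hp.one_lt.trans_le (Nat.le_self_pow hk.ne' p)) :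
      2 ^ 1 < a)
  have hnum : (p : ℝ) * (a + 1) ≤ (a : ℝ) ^ p - 1 := by
    have : ((p * (a + 1) + 1 : ℕ) : ℝ) ≤ (a ^ p : ℕ) := by
      exact_mod_cast mul_add_one_lt_pow ha hp.two_le ha'
    push_cast at this
    linarith
  have ha1 : (1 : ℝ) < a := by exact_mod_cast ha
  rw [eval_cyclotomic_prime_pow_succ_mul k m hp, show (2 : ℝ) ^ p ^ k = a by push_cast [a]; rfl]
  by_contra! hle
  have hφ : m.totient ≠ 0 := (Nat.totient_pos.mpr (by omega)).ne'
  have hpos := cyclotomic_pos' m ha1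
  have := calc ((a : ℝ) ^ p - 1) ^ m.totient
      < (cyclotomic m ℝ).eval ((a : ℝ) ^ p) :=
        sub_one_pow_totient_lt_cyclotomic_eval hm (one_lt_pow₀ ha1 hp.ne_zero)
    _ = (cyclotomic (p * m) ℝ).eval (a : ℝ) * (cyclotomic m ℝ).eval (a : ℝ) :=
        (eval_cyclotomic_mul_prime_mul_eval_cyclotomic hp hpm _).symm
    _ ≤ p * ((a : ℝ) + 1) ^ m.totient :=
        mul_le_mul hle (cyclotomic_eval_le_add_one_pow_totient ha1 m) hpos.le (by positivity)
    _ ≤ (p : ℝ) ^ m.totient * ((a : ℝ) + 1) ^ m.totient := by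
        gcongr
        exact le_self_pow₀ (by exact_mod_cast hp.one_lt.le) hφ
    _ = ((p : ℝ) * (a + 1)) ^ m.totient := (mul_pow _ _ _).symm
    _ ≤ ((a : ℝ) ^ p - 1) ^ m.totient := by gcongr
  exact lt_irrefl _ this

theorem exists_prime_orderOf_two_eq {n : ℕ} (hn : 1 < n) (h6 : n ≠ 6) :
    ∃ q : ℕ, q.Prime ∧ orderOf (2 : ZMod q) = n := by
  have hn0 : n ≠ 0 := by omega
  by_contra! hno
  have hall : ∀ q : ℕ, q.Prime → (q : ℤ) ∣ (cyclotomic n ℤ).eval 2 → q ∣ n := by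
    intro q hq hqΦ
    by_contra hqn
    have := (isPrimitiveRoot_ordCompl_of_dvd_cyclotomic_eval hq hn0 hqΦ).eq_orderOf
    rw [Nat.factorization_eq_zero_of_not_dvd hqn, pow_zero, Nat.div_one, Int.cast_ofNat] at this
    exact hno q hq this.symm
  obtain ⟨p, hp, hpΦ⟩ : ∃ p : ℕ, p.Prime ∧ (p : ℤ) ∣ (cyclotomic n ℤ).eval 2 := by
    have h1 : 1 < ((cyclotomic n ℤ).eval 2).natAbs := by
      simpa using sub_one_lt_natAbs_cyclotomic_eval hn (q := 2) (by norm_num)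
    obtain ⟨p, hp, hdvd⟩ := Nat.exists_prime_and_dvd h1.ne'
    exact ⟨p, hp, Int.natCast_dvd.mpr hdvd⟩
  have hpn := hall p hp hpΦ
  set m := ordCompl[p] n
  have hm : 2 ≤ m := two_le_ordCompl_of_dvd_cyclotomic_eval_two hp hn0 hpΦ
  have hmp : m ∣ p - 1 := ordCompl_dvd_sub_one_of_dvd_cyclotomic_eval hp hn0 hpΦ
  have hp3 : 3 ≤ p := by have := Nat.le_of_dvd (by have := hp.two_le; omega) hmp; omega
  have hΦ := eval_cyclotomic_eq_prime (by norm_num) hn0 hp (hp.odd_of_ne_two (by omega)) hpΦ hall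
  obtain ⟨k, hk⟩ := Nat.exists_eq_add_one_of_ne_zero (hp.factorization_pos_of_dvd hn0 hpn).ne'
  have hnkm : p ^ (k + 1) * m = n := by
    rw [← hk]; exact Nat.ordProj_mul_ordCompl_eq_self n p
  have hpk : 0 < k ∨ 3 < p := by
    by_contra! h
    obtain ⟨rfl, rfl⟩ : k = 0 ∧ p = 3 := by omega
    have : m = 2 := by have := Nat.le_of_dvd (by norm_num) hmp; omega
    omega
  have hlt := prime_lt_eval_cyclotomic_two hp (Nat.not_dvd_ordCompl hp hn0) hm hpk
  have hcast : (((cyclotomic n ℤ).eval 2 : ℤ) : ℝ) = (cyclotomic n ℝ).eval 2 := by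
    simpa using (cyclotomic.eval_apply (2 : ℤ) n (Int.castRingHom ℝ)).symm
  rw [hnkm, ← hcast, hΦ, Int.cast_natCast] at hlt
  exact lt_irrefl _ hlt

theorem exists_injective_dvd_ne_six {ι : Type*} {d : ι → ℕ} (hd : ∀ i, 1 < d i)
    (hinj : Function.Injective d)
    (h236 : ¬ ((∃ i, d i = 2) ∧ (∃ i, d i = 3) ∧ (∃ i, d i = 6))) :
    ∃ e : ι → ℕ, Function.Injective e ∧ ∀ i, 1 < e i ∧ e i ≠ 6 ∧ e i ∣ d i := by
  obtain ⟨r, hr6, hr1, hr, hrd⟩ :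
      ∃ r, r ∣ 6 ∧ 1 < r ∧ r ≠ 6 ∧ ((∃ i, d i = 6) → ∀ i, d i ≠ r) := by
    by_cases h2 : ∃ i, d i = 2
    · exact ⟨3, by norm_num, by norm_num, by norm_num, fun h6 i h3 => h236 ⟨h2, ⟨i, h3⟩, h6⟩⟩
    · exact ⟨2, by norm_num, by norm_num, by norm_num, fun _ i h => h2 ⟨i, h⟩⟩
  refine ⟨fun i => if d i = 6 then r else d i, fun i j hij => hinj ?_, fun i => ?_⟩
  · dsimp only at hij
    split_ifs at hij with hi hj hj
    · rw [hi, hj]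
    · exact absurd hij.symm (hrd ⟨i, hi⟩ j)
    · exact absurd hij (hrd ⟨j, hj⟩ i)
    · exact hij
  · dsimp only
    split_ifs with hi
    · exact ⟨hr1, hr, hi ▸ hr6⟩
    · exact ⟨hd i, hi, dvd_rfl⟩

theorem cdl_covering_criterion_general (n : ℕ) (d : Fin n → ℕ)
    (hd : ∀ i, 1 < d i) (hinj : Function.Injective d)
    (h236 : ¬ ((∃ i, d i = 2) ∧ (∃ i, d i = 3) ∧ (∃ i, d i = 6))) :
    ∃ p : Fin n → ℕ, Function.Injective p ∧
      ∀ i, (p i).Prime ∧ p i ∣ 2 ^ d i - 1 := by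
  obtain ⟨e, he_inj, he⟩ := exists_injective_dvd_ne_six hd hinj h236
  choose p hp hord using fun i => exists_prime_orderOf_two_eq (he i).1 (he i).2.1
  refine ⟨p, fun i j hij => he_inj ?_, fun i => ⟨hp i, ?_⟩⟩
  · rw [← hord i, ← hord j, hij]
  · have := natCast_dvd_pow_sub_one_of_orderOf_dvd (b := 2) (p := p i) (t := d i)
      (by rw [Int.cast_ofNat, hord i]; exact (he i).2.2)
    exact Int.natCast_dvd_natCast.mp (by rwa [Nat.cast_sub Nat.one_le_two_pow, Nat.cast_pow])

theorem cdl_covering_criterion (n : ℕ) (a : Fin n → ℤ) (d : Fin n → ℕ)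
    (hd : ∀ i, 1 < d i) (hinj : Function.Injective d)
    (hcov : ∀ k : ℤ, ∃ i, k ≡ a i [ZMOD d i])
    (h236 : ¬ ((∃ i, d i = 2) ∧ (∃ i, d i = 3) ∧ (∃ i, d i = 6))) :
    ∃ p : Fin n → ℕ, Function.Injective p ∧
      ∀ i, (p i).Prime ∧ p i ∣ 2 ^ d i - 1 :=
  cdl_covering_criterion_general n d hd hinj h236
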